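/- arXiv:2407.20915 — 3 statements merged into one kernel-verified Lean document; each statement's English description precedes it below -/
import Mathlib

section
/- Let I be a nonempty order-connected subset (interval) of the positive reals, and let c : ℤ → ℝ be a family of non-negative reals such that for every r ∈ I, c_i · r^i → 0 as |i| → ∞. Assume that for every r ∈ I there exists an index i(r) ∈ ℤ such that c_{i(r)} · r^{i(r)} > c_i · r^i for every i ≠ i(r). Then there exists a single j ∈ ℤ such that for every r ∈ I and every i ≠ j one has c_j · r^j > c_i · r^i. -/
/-!
The index `i` dominates at radius `r` when `c i * r ^ i` is strictly the largest term. Dominant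
indices are monotone in the radius, and if indices `i < j` dominate at radii `r < s`, the terms of
`i` and `j` tie at some intermediate radius `t` (intermediate value theorem); the index dominating
at `t` then lies strictly between `i` and `j`. Induction on `j - i` shows that this cannot happen
inside the interval.
-/

open Filter Set

def IsDominantAt (c : ℤ → ℝ) (r : ℝ) (i : ℤ) : Prop :=
  ∀ k, k ≠ i → c k * r ^ k < c i * r ^ i

namespace IsDominantAt

variable {c : ℤ → ℝ} {r s t : ℝ} {i j : ℤ}

theorem index_le_of_le (hc : ∀ k, 0 ≤ c k) (hr : 0 < r) (hrs : r ≤ s)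
    (hi : IsDominantAt c r i) (hj : IsDominantAt c s j) : i ≤ j := by
  by_contra! hji
  obtain ⟨n, rfl⟩ := Int.le.dest hji.le
  have hs : 0 < s := hr.trans_le hrs
  have at_r : c j * r ^ j < c (j + n) * r ^ n * r ^ j := by
    simpa [zpow_add₀ hr.ne', mul_comm, mul_left_comm, mul_assoc] using hi j (by omega)
  have at_s : c (j + n) * s ^ n * s ^ j < c j * s ^ j := by
    simpa [zpow_add₀ hs.ne', mul_comm, mul_left_comm, mul_assoc] using hj (j + n) (by omega)
  refine lt_irrefl (c j) ?_
  calc c j < c (j + n) * r ^ n := lt_of_mul_lt_mul_right at_r (zpow_pos hr j).le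
    _ ≤ c (j + n) * s ^ n := mul_le_mul_of_nonneg_left (pow_le_pow_left₀ hr.le hrs n) (hc _)
    _ < c j := lt_of_mul_lt_mul_right at_s (zpow_pos hs j).le

theorem not_of_tie (hij : i ≠ j) (htie : c i * t ^ i = c j * t ^ j) : ¬IsDominantAt c t i :=
  fun hi => (hi j hij.symm).ne htie.symm

theorem exists_tie (hr : 0 < r) (hrs : r ≤ s) (hi : IsDominantAt c r i)
    (hj : IsDominantAt c s j) (hij : i ≠ j) : ∃ t ∈ Ioo r s, c i * t ^ i = c j * t ^ j := by
  have hcont : ContinuousOn (fun t : ℝ => c j * t ^ j - c i * t ^ i) (Icc r s) := by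
    have hne (m : ℤ) : ∀ t ∈ Icc r s, id t ≠ 0 ∨ 0 ≤ m := fun t ht => Or.inl (hr.trans_le ht.1).ne'
    exact (continuousOn_const.mul (continuousOn_id.zpow₀ j (hne j))).sub
      (continuousOn_const.mul (continuousOn_id.zpow₀ i (hne i)))
  have hzero : (0 : ℝ) ∈ Ioo (c j * r ^ j - c i * r ^ i) (c j * s ^ j - c i * s ^ i) :=
    ⟨sub_neg.mpr (hi j hij.symm), sub_pos.mpr (hj i hij)⟩
  obtain ⟨t, ht, htie⟩ := intermediate_value_Ioo hrs hcont hzero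
  exact ⟨t, ht, (sub_eq_zero.mp htie).symm⟩

theorem eq_of_le_of_ordConnected {I : Set ℝ} (hI : I.OrdConnected) (hpos : I ⊆ Ioi 0)
    (hc : ∀ k, 0 ≤ c k) (hdom : ∀ t ∈ I, ∃ k, IsDominantAt c t k)
    (hr : r ∈ I) (hs : s ∈ I) (hrs : r ≤ s) (hi : IsDominantAt c r i)
    (hj : IsDominantAt c s j) : i = j := by
  induction h : (j - i).toNat using Nat.strong_induction_on generalizing s j with
  | _ n ih =>
    by_contra hij
    obtain ⟨t, ⟨hrt, hts⟩, htie⟩ := exists_tie (hpos hr) hrs hi hj hij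
    have htI : t ∈ I := hI.out hr hs ⟨hrt.le, hts.le⟩
    obtain ⟨k, hk⟩ := hdom t htI
    have hki : k ≠ i := by rintro rfl; exact not_of_tie hij htie hk
    have hkj : k ≠ j := by rintro rfl; exact not_of_tie (Ne.symm hij) htie.symm hk
    have hik := hi.index_le_of_le hc (hpos hr) hrt.le hk
    have hkj' := hk.index_le_of_le hc (hpos htI) hts.le hj
    exact hki (ih (k - i).toNat (by omega) htI hrt.le hk rfl).symm

end IsDominantAt

theorem dominant_index_constant_on_interval_general
    (I : Set ℝ) (hne : I.Nonempty) (hconn : I.OrdConnected) (hpos : I ⊆ Set.Ioi 0)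
    (c : ℤ → ℝ) (hc : ∀ i, 0 ≤ c i)
    (hdom : ∀ r ∈ I, ∃ i₀ : ℤ, ∀ i : ℤ, i ≠ i₀ → c i₀ * r ^ i₀ > c i * r ^ i) :
    ∃ j : ℤ, ∀ r ∈ I, ∀ i : ℤ, i ≠ j → c j * r ^ j > c i * r ^ i := by
  obtain ⟨r₀, hr₀⟩ := hne
  obtain ⟨j, hj⟩ := hdom r₀ hr₀
  refine ⟨j, fun r hr => ?_⟩
  obtain ⟨i, hi⟩ := hdom r hr
  obtain hrr₀ | hr₀r := le_total r r₀
  · rwa [IsDominantAt.eq_of_le_of_ordConnected hconn hpos hc hdom hr hr₀ hrr₀ hi hj] at hi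
  · rwa [← IsDominantAt.eq_of_le_of_ordConnected hconn hpos hc hdom hr₀ hr hr₀r hj hi] at hi

theorem dominant_index_constant_on_interval
    (I : Set ℝ) (hne : I.Nonempty) (hconn : I.OrdConnected) (hpos : I ⊆ Set.Ioi 0)
    (c : ℤ → ℝ) (hc : ∀ i, 0 ≤ c i)
    (hconv : ∀ r ∈ I, Tendsto (fun i : ℤ => c i * r ^ i) cofinite (nhds 0))
    (hdom : ∀ r ∈ I, ∃ i₀ : ℤ, ∀ i : ℤ, i ≠ i₀ → c i₀ * r ^ i₀ > c i * r ^ i) :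
    ∃ j : ℤ, ∀ r ∈ I, ∀ i : ℤ, i ≠ j → c j * r ^ j > c i * r ^ i :=
  dominant_index_constant_on_interval_general I hne hconn hpos c hc hdom
end

section
/- Let k be a field equipped with a complete non-archimedean (ultrametric) multiplicative norm. Let a, b : ℤ → k be families such that ‖a_i‖ → 0 and ‖b_i‖ → 0 as |i| → ∞, and assume that for every n ∈ ℤ the sum ∑'_{i∈ℤ} a_i · b_{n-i} equals 1 if n = 0 and equals 0 otherwise. Then there exists j ∈ ℤ such that ‖a_i‖ < ‖a_j‖ for every i ≠ j. -/
/-!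
Let `A = max ‖aᵢ‖` and `B = max ‖bᵢ‖`; both are attained, on finite sets of indices. If `ja` and
`jb` are the largest indices attaining them, then in the coefficient of degree `ja + jb` of the
product the term `a_ja * b_jb` strictly dominates all others, so by the ultrametric inequality this
coefficient has norm `A * B ≠ 0`, forcing `ja + jb = 0`. The same holds for the smallest such
indices, hence the largest and the smallest index attaining `A` coincide.
-/

open Filter Topology

namespace Filter.Tendsto

variable {ι β : Type*} [LinearOrder β] [TopologicalSpace β] [OrderTopology β]
  {f : ι → β} {b : β} {i₀ : ι}

theorem finite_setOf_le (hf : Tendsto f cofinite (𝓝 b)) {c : β} (hc : b < c) :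
    {i | c ≤ f i}.Finite := by
  simpa only [not_lt] using eventually_cofinite.mp (hf.eventually (gt_mem_nhds hc))

theorem exists_forall_ge_of_lt (hf : Tendsto f cofinite (𝓝 b)) (h₀ : b < f i₀) :
    ∃ j, ∀ i, f i ≤ f j := by
  obtain ⟨j, hj₀, hj⟩ := Set.exists_max_image _ f (hf.finite_setOf_le h₀) ⟨i₀, le_refl (f i₀)⟩
  refine ⟨j, fun i => ?_⟩
  by_cases hi : f i₀ ≤ f i
  · exact hj i hi
  · exact (lt_of_not_ge hi).le.trans hj₀

theorem exists_last_forall_ge_of_lt [LinearOrder ι] (hf : Tendsto f cofinite (𝓝 b))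
    (h₀ : b < f i₀) : ∃ j, (∀ i, f i ≤ f j) ∧ ∀ i, j < i → f i < f j := by
  obtain ⟨m, hm⟩ := hf.exists_forall_ge_of_lt h₀
  have hfin : {i | f i = f m}.Finite :=
    (hf.finite_setOf_le (h₀.trans_le (hm i₀))).subset fun i hi => hi.ge
  obtain ⟨j, hjm, hj⟩ := Set.exists_max_image _ id hfin ⟨m, rfl⟩
  have hj_max : ∀ i, f i ≤ f j := fun i => (hm i).trans_eq hjm.symm
  refine ⟨j, hj_max, fun i hji => (hj_max i).lt_of_ne fun hij => ?_⟩
  exact (hj i (hij.trans hjm)).not_gt hji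

theorem exists_first_forall_ge_of_lt [LinearOrder ι] (hf : Tendsto f cofinite (𝓝 b))
    (h₀ : b < f i₀) : ∃ j, (∀ i, f i ≤ f j) ∧ ∀ i, i < j → f i < f j :=
  exists_last_forall_ge_of_lt (ι := ιᵒᵈ) hf h₀

end Filter.Tendsto

theorem IsUltrametricDist.norm_tsum_eq_of_forall_ne_lt {E ι : Type*} [NormedAddCommGroup E]
    [CompleteSpace E] [IsUltrametricDist E] {f : ι → E} (hf : Tendsto f cofinite (𝓝 0)) {j : ι}
    (hj : ∀ i, i ≠ j → ‖f i‖ < ‖f j‖) : ‖∑' i, f i‖ = ‖f j‖ := by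
  classical
  set g : ι → E := fun i => if i = j then 0 else f i
  by_cases hg0 : ∀ i, g i = 0
  · rw [tsum_eq_single j fun i hi => by simpa [g, hi] using hg0 i]
  push Not at hg0
  obtain ⟨i₀, hi₀⟩ := hg0
  have hg : Tendsto g cofinite (𝓝 0) :=
    hf.congr' ((eventually_cofinite_ne j).mono fun i hi => by simp [g, hi])
  obtain ⟨m, hm⟩ :=
    (tendsto_zero_iff_norm_tendsto_zero.mp hg).exists_forall_ge_of_lt (norm_pos_iff.mpr hi₀)
  have hmj : m ≠ j := by
    rintro rfl
    exact hi₀ (norm_le_zero_iff.mp (by simpa [g] using hm i₀))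
  have hrem : ‖∑' i, g i‖ < ‖f j‖ :=
    calc ‖∑' i, g i‖ ≤ ‖g m‖ :=
          IsUltrametricDist.norm_tsum_le_of_forall_le_of_nonneg (norm_nonneg _) hm
      _ < ‖f j‖ := by simpa [g, hmj] using hj m hmj
  rw [(NonarchimedeanAddGroup.summable_of_tendsto_cofinite_zero hf).tsum_eq_add_tsum_ite j,
    IsUltrametricDist.norm_add_eq_max_of_norm_ne_norm hrem.ne', max_eq_left hrem.le]

theorem norm_tsum_mul_sub_eq_of_dominant {R G : Type*} [NormedRing R] [NormMulClass R]
    [CompleteSpace R] [IsUltrametricDist R] [AddCommGroup G] {a b : G → R}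
    (ha : Tendsto a cofinite (𝓝 0)) (hb : Tendsto b cofinite (𝓝 0)) {ja jb : G}
    (ha_max : ∀ i, ‖a i‖ ≤ ‖a ja‖) (hb_max : ∀ i, ‖b i‖ ≤ ‖b jb‖)
    (ha_pos : 0 < ‖a ja‖) (hb_pos : 0 < ‖b jb‖)
    (hsep : ∀ i, i ≠ ja → ‖a i‖ < ‖a ja‖ ∨ ‖b (ja + jb - i)‖ < ‖b jb‖) :
    ‖∑' i, a i * b (ja + jb - i)‖ = ‖a ja‖ * ‖b jb‖ := by
  have hprod : Tendsto (fun i => a i * b (ja + jb - i)) cofinite (𝓝 0) := by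
    simpa using ha.mul (hb.comp sub_right_injective.tendsto_cofinite)
  rw [IsUltrametricDist.norm_tsum_eq_of_forall_ne_lt hprod fun i hi => ?_, add_sub_cancel_left,
    norm_mul]
  rw [norm_mul, norm_mul, add_sub_cancel_left]
  rcases hsep i hi with h | h
  · exact mul_lt_mul_of_nonneg_of_pos h (hb_max _) (norm_nonneg _) hb_pos
  · exact mul_lt_mul_of_nonneg_of_pos' (ha_max i) h (norm_nonneg _) ha_pos

theorem invertible_circle_series_has_dominant_coefficient
    {k : Type*} [NormedField k] [CompleteSpace k] [IsUltrametricDist k]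
    (a b : ℤ → k)
    (ha : Tendsto (fun i : ℤ => ‖a i‖) cofinite (nhds 0))
    (hb : Tendsto (fun i : ℤ => ‖b i‖) cofinite (nhds 0))
    (hinv : ∀ n : ℤ, (∑' i : ℤ, a i * b (n - i)) = if n = 0 then 1 else 0) :
    ∃ j : ℤ, ∀ i : ℤ, i ≠ j → ‖a i‖ < ‖a j‖ := by
  obtain ⟨ia, hia⟩ : ∃ i, 0 < ‖a i‖ := by
    by_contra! h
    simpa [fun i => norm_le_zero_iff.mp (h i)] using hinv 0
  obtain ⟨ib, hib⟩ : ∃ i, 0 < ‖b i‖ := by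
    by_contra! h
    simpa [fun i => norm_le_zero_iff.mp (h i)] using hinv 0
  have hdegree : ∀ ja jb, (∀ i, ‖a i‖ ≤ ‖a ja‖) → (∀ i, ‖b i‖ ≤ ‖b jb‖) →
      (∀ i, i ≠ ja → ‖a i‖ < ‖a ja‖ ∨ ‖b (ja + jb - i)‖ < ‖b jb‖) → ja + jb = 0 := by
    intro ja jb ha_max hb_max hsep
    have ha_pos := hia.trans_le (ha_max ia)
    have hb_pos := hib.trans_le (hb_max ib)
    have hnorm := norm_tsum_mul_sub_eq_of_dominant (tendsto_zero_iff_norm_tendsto_zero.mpr ha)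
      (tendsto_zero_iff_norm_tendsto_zero.mpr hb) ha_max hb_max ha_pos hb_pos hsep
    by_contra hn
    rw [hinv, if_neg hn, norm_zero] at hnorm
    exact (mul_pos ha_pos hb_pos).ne hnorm
  obtain ⟨la, hla_max, hla⟩ := ha.exists_last_forall_ge_of_lt hia
  obtain ⟨lb, hlb_max, hlb⟩ := hb.exists_last_forall_ge_of_lt hib
  obtain ⟨fa, hfa_max, hfa⟩ := ha.exists_first_forall_ge_of_lt hia
  obtain ⟨fb, hfb_max, hfb⟩ := hb.exists_first_forall_ge_of_lt hib
  have hl : la + lb = 0 := hdegree la lb hla_max hlb_max fun i hi =>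
    (lt_or_gt_of_ne hi).symm.imp (hla i) fun _ => hlb _ (by omega)
  have hf : fa + fb = 0 := hdegree fa fb hfa_max hfb_max fun i hi =>
    (lt_or_gt_of_ne hi).imp (hfa i) fun _ => hfb _ (by omega)
  have hfla : fa ≤ la := not_lt.mp fun h => (hfa la h).not_ge (hla_max fa)
  have hflb : fb ≤ lb := not_lt.mp fun h => (hfb lb h).not_ge (hlb_max fb)
  obtain rfl : fa = la := by omega
  exact ⟨fa, fun i hi => (lt_or_gt_of_ne hi).elim (hfa i) (hla i)⟩
end

section
/- Let k be a field equipped with a complete non-archimedean (ultrametric) multiplicative norm, let R > 0, and let a : ℤ → k satisfy ‖a_i‖ · r^i → 0 as |i| → ∞ for every r with 0 < r < R (so that ∑_{i∈ℤ} a_i T^i defines an analytic function f on the punctured open disc {0 < |T| < R}). Assume f is invertible on a punctured neighborhood of the origin: there exist ρ with 0 < ρ ≤ R and b : ℤ → k with ‖b_i‖ · r^i → 0 as |i| → ∞ for every r with 0 < r < ρ, such that for every n ∈ ℤ the sum ∑'_{i∈ℤ} a_i · b_{n-i} equals 1 if n = 0 and equals 0 otherwise. Then there exists N ∈ ℤ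 such that a_i = 0 for every i < N; that is, f has no essential singularity at the origin and extends to a meromorphic function on the disc. -/
/-!
For `0 < r < ρ` let `ν(a, r)` be the least index `p` at which `‖a p‖ * r ^ p` is maximal. In an
ultrametric field the coefficient of the product series at `ν(a, r) + ν(b, r)` has a single
term of maximal size, so it is nonzero; since `a * b = 1` this forces
`ν(a, r) + ν(b, r) = 0`. Both indices are nondecreasing in `r`, hence constant, say `N`, for small
`r`. Dominance of index `N` for all small `r` gives `‖a m‖ < ‖a N‖ * r ^ (N - m)` for `m < N`,
and letting `r → 0` yields `a m = 0`.
-/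

open Filter Topology

lemma exists_forall_le_of_tendsto_cofinite_zero {ι : Type*} {f : ι → ℝ}
    (hf : Tendsto f cofinite (𝓝 0)) {m : ι} (hm : 0 < f m) : ∃ p, ∀ i, f i ≤ f p := by
  have hS : {i | ¬ f i < f m}.Finite := eventually_cofinite.mp (hf.eventually_lt_const hm)
  obtain ⟨p, hpS, hp⟩ := Set.exists_max_image _ f hS ⟨m, lt_irrefl _⟩
  refine ⟨p, fun i => ?_⟩
  by_cases hi : f i < f m
  · exact hi.le.trans (hp m (lt_irrefl _))
  · exact hp i hi

lemma exists_least_forall_le_of_tendsto_cofinite_zero {f : ℤ → ℝ}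
    (hf : Tendsto f cofinite (𝓝 0)) {m : ℤ} (hm : 0 < f m) :
    ∃ p, (∀ i, f i ≤ f p) ∧ ∀ i < p, f i < f p := by
  obtain ⟨q, hq⟩ := exists_forall_le_of_tendsto_cofinite_zero hf hm
  have hT : {i | f i = f q}.Finite :=
    (eventually_cofinite.mp (hf.eventually_lt_const (hm.trans_le (hq m)))).subset
      fun i hi => (show f i = f q from hi).not_lt
  obtain ⟨p, hpT, hp⟩ := Set.exists_min_image _ id hT ⟨q, rfl⟩
  have hpq : f p = f q := hpT
  refine ⟨p, fun i => hpq ▸ hq i, fun i hi => (hpq ▸ hq i).lt_of_ne fun hip => ?_⟩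
  exact hi.not_ge (hp i (hip.trans hpq))

lemma norm_tsum_eq_of_forall_norm_lt {ι E : Type*} [NormedAddCommGroup E] [CompleteSpace E]
    [IsUltrametricDist E] {x : ι → E} (hx : Tendsto x cofinite (𝓝 0)) {p : ι} (hp : x p ≠ 0)
    (hdom : ∀ i ≠ p, ‖x i‖ < ‖x p‖) : ‖∑' i, x i‖ = ‖x p‖ := by
  classical
  set y : ι → E := fun i => if i = p then 0 else x i with hy
  have hy_le : ∀ i, ‖y i‖ ≤ ‖x i‖ := fun i => by by_cases hi : i = p <;> simp [hy, hi]
  have hrest : ‖∑' i, y i‖ < ‖x p‖ := by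
    by_cases hpos : ∃ m, 0 < ‖y m‖
    · obtain ⟨m, hm⟩ := hpos
      obtain ⟨q, hq⟩ := exists_forall_le_of_tendsto_cofinite_zero
        (squeeze_zero (fun _ => norm_nonneg _) hy_le (tendsto_zero_iff_norm_tendsto_zero.mp hx)) hm
      have hqp : q ≠ p := by
        rintro rfl
        simpa [hy] using hm.trans_le (hq m)
      calc ‖∑' i, y i‖ ≤ ‖y q‖ :=
            IsUltrametricDist.norm_tsum_le_of_forall_le_of_nonneg (norm_nonneg _) hq
        _ = ‖x q‖ := by simp [hy, hqp]
        _ < ‖x p‖ := hdom q hqp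
    · push Not at hpos
      exact (IsUltrametricDist.norm_tsum_le_of_forall_le_of_nonneg le_rfl hpos).trans_lt
        (norm_pos_iff.mpr hp)
  rw [(NonarchimedeanAddGroup.summable_of_tendsto_cofinite_zero hx).tsum_eq_add_tsum_ite p,
    IsUltrametricDist.norm_add_eq_max_of_norm_ne_norm hrest.ne', max_eq_left hrest.le]

section zpow

variable {r u v : ℝ} {i j : ℤ}

lemma mul_zpow_lt_mul_zpow_add_iff (hr : 0 < r) : u * r ^ i < v * r ^ (i + j) ↔ u < v * r ^ j := by
  rw [zpow_add₀ hr.ne', mul_left_comm, mul_comm u, mul_lt_mul_iff_of_pos_left (zpow_pos hr i)]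

lemma mul_zpow_add_le_mul_zpow_iff (hr : 0 < r) : u * r ^ (i + j) ≤ v * r ^ i ↔ u * r ^ j ≤ v := by
  rw [zpow_add₀ hr.ne', mul_left_comm, mul_comm v, mul_le_mul_iff_of_pos_left (zpow_pos hr i)]

end zpow

structure IsLeastDominantIndex {E : Type*} [Zero E] [Norm E] (a : ℤ → E) (r : ℝ) (p : ℤ) :
    Prop where
  ne_zero : a p ≠ 0
  le_dominant : ∀ i, ‖a i‖ * r ^ i ≤ ‖a p‖ * r ^ p
  lt_dominant : ∀ i < p, ‖a i‖ * r ^ i < ‖a p‖ * r ^ p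

namespace IsLeastDominantIndex

section NormedAddGroup

variable {E : Type*} [NormedAddGroup E] {a : ℤ → E} {r s : ℝ} {p q : ℤ}

lemma exists_of_tendsto (hr : 0 < r) (ha : Tendsto (fun i => ‖a i‖ * r ^ i) cofinite (𝓝 0))
    (hne : a ≠ 0) : ∃ p, IsLeastDominantIndex a r p := by
  obtain ⟨m, hm⟩ := Function.ne_iff.mp hne
  have hpos : 0 < ‖a m‖ * r ^ m := mul_pos (norm_pos_iff.mpr hm) (zpow_pos hr m)
  obtain ⟨p, hle, hlt⟩ := exists_least_forall_le_of_tendsto_cofinite_zero ha hpos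
  refine ⟨p, fun hp => ?_, hle, hlt⟩
  simpa [hp] using hpos.trans_le (hle m)

lemma norm_mul_zpow_pos (hp : IsLeastDominantIndex a r p) (hr : 0 < r) :
    0 < ‖a p‖ * r ^ p :=
  mul_pos (norm_pos_iff.mpr hp.ne_zero) (zpow_pos hr p)

lemma le_of_lt (hp : IsLeastDominantIndex a r p) (hq : IsLeastDominantIndex a s q) (hr : 0 < r)
    (hrs : r < s) : p ≤ q := by
  by_contra! hqp
  obtain ⟨d, rfl⟩ : ∃ d, p = q + d := ⟨p - q, by ring⟩
  have hs : 0 < s := hr.trans hrs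
  have h_at_r : ‖a q‖ < ‖a (q + d)‖ * r ^ d :=
    (mul_zpow_lt_mul_zpow_add_iff hr).mp (hp.lt_dominant q hqp)
  have h_at_s : ‖a (q + d)‖ * s ^ d ≤ ‖a q‖ :=
    (mul_zpow_add_le_mul_zpow_iff hs).mp (hq.le_dominant (q + d))
  have hpow : r ^ d < s ^ d := zpow_lt_zpow_left₀ (by omega) hr.le hrs
  have := mul_lt_mul_of_pos_left hpow (norm_pos_iff.mpr hp.ne_zero)
  linarith

end NormedAddGroup

lemma norm_tsum_mul {k : Type*} [NormedDivisionRing k] [CompleteSpace k] [IsUltrametricDist k]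
    {a b : ℤ → k} {r : ℝ} {p q : ℤ} (hr : 0 < r)
    (ha : Tendsto (fun i => ‖a i‖ * r ^ i) cofinite (𝓝 0))
    (hb : Tendsto (fun i => ‖b i‖ * r ^ i) cofinite (𝓝 0))
    (hp : IsLeastDominantIndex a r p) (hq : IsLeastDominantIndex b r q) :
    ‖∑' i, a i * b (p + q - i)‖ = ‖a p‖ * ‖b q‖ := by
  set A : ℤ → ℝ := fun i => ‖a i‖ * r ^ i
  set B : ℤ → ℝ := fun i => ‖b i‖ * r ^ i
  have hnorm : ∀ i, ‖a i * b (p + q - i)‖ = A i * B (p + q - i) / r ^ (p + q) := fun i => by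
    have hsplit : r ^ (p + q) = r ^ i * r ^ (p + q - i) := by
      rw [← zpow_add₀ hr.ne', add_sub_cancel]
    rw [hsplit, norm_mul]
    field_simp
    ring
  have hx : Tendsto (fun i => a i * b (p + q - i)) cofinite (𝓝 0) := by
    rw [tendsto_zero_iff_norm_tendsto_zero]
    simp_rw [hnorm]
    simpa using (ha.mul (hb.comp sub_right_injective.tendsto_cofinite)).div_const (r ^ (p + q))
  have hdom : ∀ i ≠ p, ‖a i * b (p + q - i)‖ < ‖a p * b (p + q - p)‖ := by
    intro i hi
    rw [hnorm, hnorm, div_lt_div_iff_of_pos_right (zpow_pos hr _), add_sub_cancel_left]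
    rcases hi.lt_or_gt with hip | hpi
    · calc A i * B (p + q - i) ≤ A i * B q := by gcongr; exact hq.le_dominant _
        _ < A p * B q := mul_lt_mul_of_pos_right (hp.lt_dominant i hip) (hq.norm_mul_zpow_pos hr)
    · calc A i * B (p + q - i) ≤ A p * B (p + q - i) := by gcongr; exact hp.le_dominant i
        _ < A p * B q := mul_lt_mul_of_pos_left (hq.lt_dominant _ (by omega))
            (hp.norm_mul_zpow_pos hr)
  rw [norm_tsum_eq_of_forall_norm_lt hx (by simpa using ⟨hp.ne_zero, hq.ne_zero⟩) hdom,
    add_sub_cancel_left, norm_mul]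

lemma eq_zero_of_lt_of_forall_small_radius {E : Type*} [NormedAddGroup E] {a : ℤ → E} {N : ℤ}
    {r₀ : ℝ} (hr₀ : 0 < r₀) (hN : ∀ r, 0 < r → r < r₀ → IsLeastDominantIndex a r N) {m : ℤ}
    (hm : m < N) : a m = 0 := by
  obtain ⟨d, rfl⟩ : ∃ d, N = m + d := ⟨N - m, by ring⟩
  have hbound : ∀ r, 0 < r → r < r₀ → ‖a m‖ ≤ ‖a (m + d)‖ * r ^ d := fun r hr hrr₀ =>
    ((mul_zpow_lt_mul_zpow_add_iff hr).mp ((hN r hr hrr₀).lt_dominant m hm)).le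
  have hlim : Tendsto (fun r : ℝ => ‖a (m + d)‖ * r ^ d) (𝓝[>] 0) (𝓝 0) := by
    have := ((continuousAt_zpow₀ (0 : ℝ) d (Or.inr (by omega))).tendsto.const_mul
      ‖a (m + d)‖).mono_left (nhdsWithin_le_nhds (s := Set.Ioi 0))
    rwa [zero_zpow d (by omega), mul_zero] at this
  have hev : ∀ᶠ r in 𝓝[>] (0 : ℝ), ‖a m‖ ≤ ‖a (m + d)‖ * r ^ d := by
    filter_upwards [Ioo_mem_nhdsGT hr₀] with r hr using hbound r hr.1 hr.2
  exact norm_le_zero_iff.mp (ge_of_tendsto hlim hev)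

end IsLeastDominantIndex

open IsLeastDominantIndex in
theorem no_essential_singularity_of_invertible_near_puncture_general
    {k : Type*} [NormedField k] [CompleteSpace k] [IsUltrametricDist k]
    (R : ℝ) (a : ℤ → k)
    (ha : ∀ r : ℝ, 0 < r → r < R →
      Tendsto (fun i : ℤ => ‖a i‖ * r ^ i) cofinite (nhds 0))
    (hinv : ∃ ρ : ℝ, 0 < ρ ∧ ρ ≤ R ∧ ∃ b : ℤ → k,
      (∀ r : ℝ, 0 < r → r < ρ →
        Tendsto (fun i : ℤ => ‖b i‖ * r ^ i) cofinite (nhds 0)) ∧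
      ∀ n : ℤ, (∑' i : ℤ, a i * b (n - i)) = if n = 0 then 1 else 0) :
    ∃ N : ℤ, ∀ i : ℤ, i < N → a i = 0 := by
  obtain ⟨ρ, hρ, hρR, b, hb, hab⟩ := hinv
  have ha' : ∀ r, 0 < r → r < ρ → Tendsto (fun i => ‖a i‖ * r ^ i) cofinite (𝓝 0) :=
    fun r hr hrρ => ha r hr (hrρ.trans_le hρR)
  have ha0 : a ≠ 0 := by rintro rfl; simpa using hab 0
  have hb0 : b ≠ 0 := by rintro rfl; simpa using hab 0
  have hindex_add : ∀ r, 0 < r → r < ρ → ∀ p q, IsLeastDominantIndex a r p →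
      IsLeastDominantIndex b r q → p + q = 0 := by
    intro r hr hrρ p q hp hq
    by_contra hpq
    have hcoeff := norm_tsum_mul hr (ha' r hr hrρ) (hb r hr hrρ) hp hq
    rw [hab, if_neg hpq, norm_zero] at hcoeff
    exact mul_ne_zero (norm_ne_zero_iff.mpr hp.ne_zero) (norm_ne_zero_iff.mpr hq.ne_zero)
      hcoeff.symm
  have hr₀ : ρ / 2 < ρ := half_lt_self hρ
  obtain ⟨N, hN⟩ := exists_of_tendsto (half_pos hρ) (ha' _ (half_pos hρ) hr₀) ha0
  obtain ⟨M, hM⟩ := exists_of_tendsto (half_pos hρ) (hb _ (half_pos hρ) hr₀) hb0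
  refine ⟨N, fun i hi =>
    eq_zero_of_lt_of_forall_small_radius (half_pos hρ) (fun r hr hrr₀ => ?_) hi⟩
  obtain ⟨p, hp⟩ := exists_of_tendsto hr (ha' r hr (hrr₀.trans hr₀)) ha0
  obtain ⟨q, hq⟩ := exists_of_tendsto hr (hb r hr (hrr₀.trans hr₀)) hb0
  have hpN := hp.le_of_lt hN hr hrr₀
  have hqM := hq.le_of_lt hM hr hrr₀
  have hpq := hindex_add r hr (hrr₀.trans hr₀) p q hp hq
  have hNM := hindex_add _ (half_pos hρ) hr₀ N M hN hM
  obtain rfl : p = N := by omega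
  exact hp

theorem no_essential_singularity_of_invertible_near_puncture
    {k : Type*} [NormedField k] [CompleteSpace k] [IsUltrametricDist k]
    (R : ℝ) (hR : 0 < R) (a : ℤ → k)
    (ha : ∀ r : ℝ, 0 < r → r < R →
      Tendsto (fun i : ℤ => ‖a i‖ * r ^ i) cofinite (nhds 0))
    (hinv : ∃ ρ : ℝ, 0 < ρ ∧ ρ ≤ R ∧ ∃ b : ℤ → k,
      (∀ r : ℝ, 0 < r → r < ρ →
        Tendsto (fun i : ℤ => ‖b i‖ * r ^ i) cofinite (nhds 0)) ∧
      ∀ n : ℤ, (∑' i : ℤ, a i * b (n - i)) = if n = 0 then 1 else 0) :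
    ∃ N : ℤ, ∀ i : ℤ, i < N → a i = 0 :=
  no_essential_singularity_of_invertible_near_puncture_general R a ha hinv
end
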